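/- Let a, b, c, d, f, g : ℝ → ℝ with a, d differentiable and a(t) ≠ 0, and let μ be twice differentiable on an interval J with μ(t) ≠ 0 and μ'(t) ≠ 0, satisfying the characteristic equation μ'' − τμ' + 4σμ = 0 where τ = a'/a − 2c + 4d and σ = ab − cd + d² + (d·a')/(2a) − d'/2. Set E(t) = exp(−∫₀ᵗ (c(τ) − 2d(τ)) dτ), β(t) = −E(t)/μ(t), let δ be differentiable satisfying δ' + (c + μ'/μ − 2d)δ = f + 2αg with α = μ'/(4aμ) − d/(2a), and define ε(t) = −(2a(t)/μ'(t))·δ(t)·E(t) + 8∫₀ᵗ (a(τ)σ(τ)/μ'(τ)²)·E(τ)·μ(τ)δ(τ) dτ + 2∫₀ᵗ (a(τ)/μ'(τ))·E(τ)·(f(τ) − (d(τ)/a(τ))g(τ)) dτ. Then ε is differentiable on J and satisfies ε' = (g − 2aδ)β. -/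

import Mathlib

/-!
Differentiate `ε` term by term. By the characteristic equation, the derivative of `2a/μ'`
produces exactly the term `8 h₁` with the opposite sign; by the equation for `δ`, the term
`(2a/μ') δ' E` cancels `2 h₂` up to `−gE/μ = gβ`; the remaining multiples of `δE` add up to
`2aδE/μ = −2aδβ`.
-/

open MeasureTheory intervalIntegral

theorem hasDerivAt_exp_neg_integral {φ : ℝ → ℝ} (hφ : Continuous φ) (t₀ t : ℝ) :
    HasDerivAt (fun s => Real.exp (-∫ τ in t₀..s, φ τ))
      (-φ t * Real.exp (-∫ τ in t₀..t, φ τ)) t := by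
  have hI : HasDerivAt (fun s => ∫ τ in t₀..s, φ τ) (φ t) t :=
    integral_hasDerivAt_right (hφ.intervalIntegrable t₀ t)
      (hφ.stronglyMeasurableAtFilter volume _) hφ.continuousAt
  simpa only [mul_comm] using hI.fun_neg.exp

theorem hasDerivAt_integral_of_isOpen {h : ℝ → ℝ} {U : Set ℝ} {t₀ : ℝ} (hU : IsOpen U)
    (hcont : ∀ t ∈ U, ContinuousAt h t) {t : ℝ} (ht : t ∈ U)
    (hint : IntervalIntegrable h volume t₀ t) :
    HasDerivAt (fun s => ∫ τ in t₀..s, h τ) (h t) t :=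
  integral_hasDerivAt_right hint (ContinuousAt.stronglyMeasurableAtFilter hU hcont t ht)
    (hcont t ht)

theorem epsilon_deriv_identity {a a' c d f g μ μ' μ'' δ δ' E σ : ℝ}
    (ha : a ≠ 0) (hμ : μ ≠ 0) (hμ' : μ' ≠ 0)
    (hchar : μ'' - (a' / a - 2 * c + 4 * d) * μ' + 4 * σ * μ = 0)
    (hδ : δ' + (c + μ' / μ - 2 * d) * δ =
      f + 2 * (μ' / (4 * a * μ) - d / (2 * a)) * g) :
    (-((2 * a' * μ' - 2 * a * μ'') / μ' ^ 2) * δ + -(2 * a / μ') * δ') * E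
        + -(2 * a / μ') * δ * (-(c - 2 * d) * E)
        + 8 * (a * σ / μ' ^ 2 * E * (μ * δ)) + 2 * (a / μ' * E * (f - d / a * g)) =
      (g - 2 * a * δ) * (-E / μ) := by
  have hμ'' : μ'' = (a' / a - 2 * c + 4 * d) * μ' - 4 * σ * μ := by linarith
  have hδ' : δ' = f + 2 * (μ' / (4 * a * μ) - d / (2 * a)) * g
      - (c + μ' / μ - 2 * d) * δ := by linarith
  rw [hμ'', hδ']
  field_simp
  ring

theorem epsilon_coefficient_ode_general
    (a c d f g : ℝ → ℝ)
    (ha : Differentiable ℝ a) (hd : Differentiable ℝ d)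
    (ha0 : ∀ t : ℝ, a t ≠ 0) (hc : Continuous c)
    (J : Set ℝ) (hJopen : IsOpen J)
    (μ : ℝ → ℝ)
    (hμ2 : ∀ t ∈ J, DifferentiableAt ℝ (deriv μ) t)
    (hμ0 : ∀ t ∈ J, μ t ≠ 0) (hμ'0 : ∀ t ∈ J, deriv μ t ≠ 0)
    (σ : ℝ → ℝ)
    (hchar : ∀ t ∈ J,
      deriv (deriv μ) t - (deriv a t / a t - 2 * c t + 4 * d t) * deriv μ t +
        4 * σ t * μ t = 0)
    (E : ℝ → ℝ) (hE : E = fun t => Real.exp (-∫ τ in (0:ℝ)..t, (c τ - 2 * d τ)))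
    (β : ℝ → ℝ) (hβ : β = fun t => -E t / μ t)
    (α : ℝ → ℝ)
    (hα : α = fun t => deriv μ t / (4 * a t * μ t) - d t / (2 * a t))
    (δ : ℝ → ℝ) (hδ1 : ∀ t ∈ J, DifferentiableAt ℝ δ t)
    (hδ2 : ∀ t ∈ J,
      deriv δ t + (c t + deriv μ t / μ t - 2 * d t) * δ t = f t + 2 * α t * g t)
    (h₁ h₂ : ℝ → ℝ)
    (hh₁ : h₁ = fun τ => a τ * σ τ / (deriv μ τ) ^ 2 * E τ * (μ τ * δ τ))
    (hh₂ : h₂ = fun τ => a τ / deriv μ τ * E τ * (f τ - d τ / a τ * g τ))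
    (hInt₁ : ∀ t ∈ J, IntervalIntegrable h₁ volume 0 t)
    (hInt₂ : ∀ t ∈ J, IntervalIntegrable h₂ volume 0 t)
    (hhc₁ : ∀ t ∈ J, ContinuousAt h₁ t) (hhc₂ : ∀ t ∈ J, ContinuousAt h₂ t)
    (ε : ℝ → ℝ)
    (hε : ε = fun t => -(2 * a t / deriv μ t) * δ t * E t +
      8 * (∫ τ in (0:ℝ)..t, h₁ τ) + 2 * ∫ τ in (0:ℝ)..t, h₂ τ) :
    ∀ t ∈ J, DifferentiableAt ℝ ε t ∧ deriv ε t = (g t - 2 * a t * δ t) * β t := by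
  intro t ht
  have hE' : HasDerivAt E (-(c t - 2 * d t) * E t) t := by
    subst hE
    exact hasDerivAt_exp_neg_integral (hc.sub (continuous_const.mul hd.continuous)) 0 t
  have hcoef : HasDerivAt (fun s => 2 * a s / deriv μ s)
      ((2 * deriv a t * deriv μ t - 2 * a t * deriv (deriv μ) t) / deriv μ t ^ 2) t :=
    ((ha t).hasDerivAt.const_mul 2).div (hμ2 t ht).hasDerivAt (hμ'0 t ht)
  have hε' := ((hcoef.fun_neg.fun_mul (hδ1 t ht).hasDerivAt).fun_mul hE').fun_add
    ((hasDerivAt_integral_of_isOpen hJopen hhc₁ ht (hInt₁ t ht)).const_mul 8) |>.fun_add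
    ((hasDerivAt_integral_of_isOpen hJopen hhc₂ ht (hInt₂ t ht)).const_mul 2)
  rw [← hε] at hε'
  refine ⟨hε'.differentiableAt, ?_⟩
  rw [hε'.deriv, hβ, hh₁, hh₂]
  exact epsilon_deriv_identity (ha0 t) (hμ0 t ht) (hμ'0 t ht) (hchar t ht)
    (by simpa only [hα] using hδ2 t ht)

/-- The coefficient
`ε(t) = −(2a/μ')δE + 8∫₀ᵗ (aσ/μ'²)E·μδ + 2∫₀ᵗ (a/μ')E(f − (d/a)g)` is
differentiable and satisfies `ε' = (g − 2aδ)β` on `J`, provided `μ` solves the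
characteristic equation and `δ` solves `δ' + (c + μ'/μ − 2d)δ = f + 2αg`. -/
theorem epsilon_coefficient_ode
    (a b c d f g : ℝ → ℝ)
    (ha : Differentiable ℝ a) (hd : Differentiable ℝ d)
    (ha0 : ∀ t : ℝ, a t ≠ 0) (hc : Continuous c)
    (J : Set ℝ) (hJopen : IsOpen J) (hJconn : J.OrdConnected)
    (μ : ℝ → ℝ)
    (hμ1 : ∀ t ∈ J, DifferentiableAt ℝ μ t)
    (hμ2 : ∀ t ∈ J, DifferentiableAt ℝ (deriv μ) t)
    (hμ0 : ∀ t ∈ J, μ t ≠ 0) (hμ'0 : ∀ t ∈ J, deriv μ t ≠ 0)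
    (σ : ℝ → ℝ)
    (hσ : σ = fun t => a t * b t - c t * d t + d t ^ 2 + d t * deriv a t / (2 * a t) -
      deriv d t / 2)
    (hchar : ∀ t ∈ J,
      deriv (deriv μ) t - (deriv a t / a t - 2 * c t + 4 * d t) * deriv μ t +
        4 * σ t * μ t = 0)
    (E : ℝ → ℝ) (hE : E = fun t => Real.exp (-∫ τ in (0:ℝ)..t, (c τ - 2 * d τ)))
    (β : ℝ → ℝ) (hβ : β = fun t => -E t / μ t)
    (α : ℝ → ℝ)
    (hα : α = fun t => deriv μ t / (4 * a t * μ t) - d t / (2 * a t))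
    (δ : ℝ → ℝ) (hδ1 : ∀ t ∈ J, DifferentiableAt ℝ δ t)
    (hδ2 : ∀ t ∈ J,
      deriv δ t + (c t + deriv μ t / μ t - 2 * d t) * δ t = f t + 2 * α t * g t)
    (h₁ h₂ : ℝ → ℝ)
    (hh₁ : h₁ = fun τ => a τ * σ τ / (deriv μ τ) ^ 2 * E τ * (μ τ * δ τ))
    (hh₂ : h₂ = fun τ => a τ / deriv μ τ * E τ * (f τ - d τ / a τ * g τ))
    (hInt₁ : ∀ t ∈ J, IntervalIntegrable h₁ volume 0 t)
    (hInt₂ : ∀ t ∈ J, IntervalIntegrable h₂ volume 0 t)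
    (hhc₁ : ∀ t ∈ J, ContinuousAt h₁ t) (hhc₂ : ∀ t ∈ J, ContinuousAt h₂ t)
    (ε : ℝ → ℝ)
    (hε : ε = fun t => -(2 * a t / deriv μ t) * δ t * E t +
      8 * (∫ τ in (0:ℝ)..t, h₁ τ) + 2 * ∫ τ in (0:ℝ)..t, h₂ τ) :
    ∀ t ∈ J, DifferentiableAt ℝ ε t ∧ deriv ε t = (g t - 2 * a t * δ t) * β t :=
  epsilon_coefficient_ode_general a c d f g ha hd ha0 hc J hJopen μ hμ2 hμ0 hμ'0 σ hchar E hE β hβ α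
    hα δ hδ1 hδ2 h₁ h₂ hh₁ hh₂ hInt₁ hInt₂ hhc₁ hhc₂ ε hε
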